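/- arXiv:1812.04888 — 2 statements merged into one kernel-verified Lean document; each statement's English description precedes it below -/
import Mathlib

section
/- Let (Z, ρ₀) be a compact metric space of diameter one, and let ρ₁, ρ₂ be two antipodal metrics on Z (diameter one, and every point has a point at distance 1) that are Moebius equivalent to ρ₀ (i.e. have the same cross-ratio [ξ,ξ',η,η'] = ρ(ξ,η)ρ(ξ',η')/(ρ(ξ,η')ρ(ξ',η))). Suppose there is a continuous positive function dρ₂/dρ₁ : Z → ℝ with ρ₂(ξ,η)² = (dρ₂/dρ₁)(ξ)·(dρ₂/dρ₁)(η)·ρ₁(ξ,η)² for all ξ, η, and the maximum λ and minimum μ of dρ₂/dρ₁ satisfy λ·μ = 1. If ξ ∈ Z attains the maximum of dρ₂/dρ₁ and ξ' ∈ Z satisfies ρ₁(ξ,ξ') = 1, then dρ₂/dρ₁ attains its minimum at ξ' and ρ₂(ξ,ξ') = 1. -/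
/-- Lemma `maxminantipodal`, first part: if `ξ` attains the maximum of the derivative
`dρ₂/dρ₁` and `ρ₁(ξ,ξ') = 1`, then the derivative attains its minimum at `ξ'` and
`ρ₂(ξ,ξ') = 1`. -/
theorem stmt_0 {Z : Type*} [MetricSpace Z] [CompactSpace Z]
    (ρ₁ ρ₂ : Z → Z → ℝ) (D : Z → ℝ) (lam mu : ℝ)
    (hDcont : Continuous D) (hDpos : ∀ z, 0 < D z)
    (hρ₁nonneg : ∀ ξ η, 0 ≤ ρ₁ ξ η) (hρ₂nonneg : ∀ ξ η, 0 ≤ ρ₂ ξ η)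
    (hρ₁diam : ∀ ξ η, ρ₁ ξ η ≤ 1) (hρ₂diam : ∀ ξ η, ρ₂ ξ η ≤ 1)
    (hρ₁diamone : ∃ ξ η, ρ₁ ξ η = 1) (hρ₂diamone : ∃ ξ η, ρ₂ ξ η = 1)
    (hρ₁antipodal : ∀ ξ, ∃ η, ρ₁ ξ η = 1)
    (hρ₂antipodal : ∀ ξ, ∃ η, ρ₂ ξ η = 1)
    (hcocycle : ∀ ξ η, (ρ₂ ξ η) ^ 2 = D ξ * D η * (ρ₁ ξ η) ^ 2)
    (hmax : ∀ z, D z ≤ lam) (hmin : ∀ z, mu ≤ D z)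
    (hlammu : lam * mu = 1)
    (ξ ξ' : Z) (hξ : D ξ = lam) (hξ' : ρ₁ ξ ξ' = 1) :
    D ξ' = mu ∧ ρ₂ ξ ξ' = 1 := by
  have hlampos : 0 < lam := hξ ▸ hDpos ξ
  have hc := hcocycle ξ ξ'
  rw [hξ', hξ] at hc
  have h1 : ρ₂ ξ ξ' ^ 2 ≤ 1 := by
    have := hρ₂diam ξ ξ'
    have := hρ₂nonneg ξ ξ'
    nlinarith
  have hle : lam * D ξ' ≤ lam * mu := by
    rw [hlammu]; nlinarith
  have hD' : D ξ' = mu := le_antisymm (le_of_mul_le_mul_left hle hlampos) (hmin ξ')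
  refine ⟨hD', ?_⟩
  have : ρ₂ ξ ξ' ^ 2 = 1 := by rw [hc, hD']; nlinarith
  nlinarith [hρ₂nonneg ξ ξ']
end

section
/- With the same hypotheses: if η ∈ Z attains the minimum of dρ₂/dρ₁ and η' ∈ Z satisfies ρ₂(η,η') = 1, then dρ₂/dρ₁ attains its maximum at η' and ρ₁(η,η') = 1. -/
/-- Lemma `maxminantipodal`, second part: if `η` attains the minimum of the derivative
`dρ₂/dρ₁` and `ρ₂(η,η') = 1`, then the derivative attains its maximum at `η'` and
`ρ₁(η,η') = 1`. -/
theorem stmt_1 {Z : Type*} [MetricSpace Z] [CompactSpace Z]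
    (ρ₁ ρ₂ : Z → Z → ℝ) (D : Z → ℝ) (lam mu : ℝ)
    (hDcont : Continuous D) (hDpos : ∀ z, 0 < D z)
    (hρ₁nonneg : ∀ ξ η, 0 ≤ ρ₁ ξ η) (hρ₂nonneg : ∀ ξ η, 0 ≤ ρ₂ ξ η)
    (hρ₁diam : ∀ ξ η, ρ₁ ξ η ≤ 1) (hρ₂diam : ∀ ξ η, ρ₂ ξ η ≤ 1)
    (hρ₁diamone : ∃ ξ η, ρ₁ ξ η = 1) (hρ₂diamone : ∃ ξ η, ρ₂ ξ η = 1)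
    (hρ₁antipodal : ∀ ξ, ∃ η, ρ₁ ξ η = 1)
    (hρ₂antipodal : ∀ ξ, ∃ η, ρ₂ ξ η = 1)
    (hcocycle : ∀ ξ η, (ρ₂ ξ η) ^ 2 = D ξ * D η * (ρ₁ ξ η) ^ 2)
    (hmax : ∀ z, D z ≤ lam) (hmin : ∀ z, mu ≤ D z)
    (hlammu : lam * mu = 1)
    (η η' : Z) (hη : D η = mu) (hη' : ρ₂ η η' = 1) :
    D η' = lam ∧ ρ₁ η η' = 1 := by
  have hmupos : 0 < mu := hη ▸ hDpos η
  have hlampos : 0 < lam := lt_of_lt_of_le (hDpos η') (hmax η')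
  have key : mu * (D η' * ρ₁ η η' ^ 2) = mu * lam := by
    have h := hcocycle η η'
    rw [hη', hη] at h
    nlinarith [h]
  have h1 : D η' * ρ₁ η η' ^ 2 = lam := by
    have := mul_left_cancel₀ hmupos.ne' key
    linarith
  have hr1 : ρ₁ η η' ^ 2 ≤ 1 := by
    nlinarith [hρ₁nonneg η η', hρ₁diam η η']
  have hD' : D η' = lam := by
    nlinarith [hmax η', hDpos η', hρ₁nonneg η η']
  have hsq : ρ₁ η η' ^ 2 = 1 := by
    rw [hD'] at h1; nlinarith
  constructor
  · exact hD'
  · nlinarith [hρ₁nonneg η η']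
end
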